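/- arXiv:2408.15468 — 3 statements merged into one kernel-verified Lean document; each statement's English description precedes it below -/
import Mathlib

section
/- On the middle-third Cantor set CS with Cantor function c, for all integers m ≥ 1 and n ≥ 1 one has the recursion φ_n(x^m, c) = (1/(2·3^m))·φ_{n−1}(x^m, c) + (1/2)·∑_{r=0}^m (−1/3)^r·C(m,r)·φ_{n−1}(x^r, c). Consequently, for every m ≥ 0 the limit φ(x^m, c) = lim_n φ_n(x^m, c) exists, and it satisfies φ(x^0, c) = 2, φ(x^m, c) = (1/2)·∑_{r=0}^{m−1} (−1/3)^r·C(m,r)·φ(x^r, c) for odd m, and φ(x^m, c) = (3^m/(2(3^m−1)))·∑_{r=0}^{m−1} (−1/3)^r·C(m,r)·φ(x^r, c) for even m ≥ 2. -/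
open Filter Topology

/-- `a_s = ∑_{i=1}^n 2 s_i/3^i` for a word `s ∈ {0,1}^n`. -/
noncomputable def aPt {n : ℕ} (s : Fin n → Fin 2) : ℝ :=
  ∑ i : Fin n, 2 * ((s i : ℕ) : ℝ) / 3 ^ ((i : ℕ) + 1)

/-- `b_s = a_s + 1/3^n`. -/
noncomputable def bPt {n : ℕ} (s : Fin n → Fin 2) : ℝ := aPt s + 1 / 3 ^ n

/-- Value of the Cantor function at `a_s`: `c(a_s) = ∑_{i=1}^n s_i/2^i`. -/
noncomputable def cA {n : ℕ} (s : Fin n → Fin 2) : ℝ :=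
  ∑ i : Fin n, ((s i : ℕ) : ℝ) / 2 ^ ((i : ℕ) + 1)

/-- Value of the Cantor function at `b_s`: `c(b_s) = c(a_s) + 1/2^n`. -/
noncomputable def cB {n : ℕ} (s : Fin n → Fin 2) : ℝ := cA s + 1 / 2 ^ n

/-- `φ_n(x^m, c) = ∑_{s ∈ {0,1}^n} (a_s^m + b_s^m)·(c(b_s) − c(a_s))`. -/
noncomputable def phiM (m n : ℕ) : ℝ :=
  ∑ s : Fin n → Fin 2, ((aPt s) ^ m + (bPt s) ^ m) * (cB s - cA s)

lemma cB_sub_cA {n : ℕ} (s : Fin n → Fin 2) : cB s - cA s = 1 / 2 ^ n := by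
  simp [cB]

noncomputable def SS (m n : ℕ) : ℝ := ∑ s : Fin n → Fin 2, ((aPt s) ^ m + (bPt s) ^ m)

lemma phiM_eq (m n : ℕ) : phiM m n = (1 / 2 ^ n) * SS m n := by
  rw [phiM, SS, Finset.mul_sum]
  exact Finset.sum_congr rfl fun s _ => by rw [cB_sub_cA]; ring

lemma phiM_zero (n : ℕ) : phiM 0 n = 2 := by
  rw [phiM_eq, SS]
  simp [Finset.sum_const, Finset.card_univ]
  field_simp
  ring

lemma aPt_cons {n : ℕ} (j : Fin 2) (t : Fin n → Fin 2) :
    aPt (Fin.cons j t) = 2 * ((j:ℕ):ℝ) / 3 + aPt t / 3 := by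
  rw [aPt, Fin.sum_univ_succ]
  simp only [Fin.cons_zero, Fin.cons_succ, aPt, Finset.sum_div]
  congr 1
  · norm_num
  · exact Finset.sum_congr rfl fun i _ => by
      rw [Fin.val_succ]
      ring

lemma bPt_cons {n : ℕ} (j : Fin 2) (t : Fin n → Fin 2) :
    bPt (Fin.cons j t) = 2 * ((j:ℕ):ℝ) / 3 + bPt t / 3 := by
  rw [bPt, bPt, aPt_cons]
  rw [pow_succ]
  ring

lemma geo (n : ℕ) : ∑ i : Fin n, 2 / (3:ℝ) ^ ((i:ℕ) + 1) = 1 - 1 / 3 ^ n := by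
  induction n with
  | zero => simp
  | succ n ih =>
    rw [Fin.sum_univ_castSucc]
    simp only [Fin.coe_castSucc, Fin.val_last]
    rw [ih, pow_succ]
    have h3 : (3:ℝ)^n ≠ 0 := by positivity
    field_simp
    ring

def flipE (n : ℕ) : (Fin n → Fin 2) ≃ (Fin n → Fin 2) :=
  Equiv.piCongrRight fun _ => Equiv.swap 0 1

lemma swap_val (j : Fin 2) : (((Equiv.swap (0:Fin 2) 1) j : ℕ) : ℝ) = 1 - ((j:ℕ):ℝ) := by
  fin_cases j <;> simp

lemma aPt_flip {n : ℕ} (s : Fin n → Fin 2) : aPt (flipE n s) = 1 - bPt s := by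
  rw [bPt, aPt, aPt]
  have : ∀ i : Fin n, 2 * (((flipE n s) i : ℕ) : ℝ) / 3 ^ ((i:ℕ)+1)
      = 2 / 3 ^ ((i:ℕ)+1) - 2 * ((s i : ℕ) : ℝ) / 3 ^ ((i:ℕ)+1) := by
    intro i
    have : ((flipE n s i : ℕ) : ℝ) = 1 - ((s i : ℕ) : ℝ) := by
      simp only [flipE, Equiv.piCongrRight_apply, Pi.map_apply]
      exact swap_val (s i)
    rw [this]; ring
  rw [Finset.sum_congr rfl fun i _ => this i, Finset.sum_sub_distrib, geo]
  ring

lemma bPt_flip {n : ℕ} (s : Fin n → Fin 2) : bPt (flipE n s) = 1 - aPt s := by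
  rw [bPt, aPt_flip, bPt]; ring

lemma sum_flip {n : ℕ} (r : ℕ) :
    ∑ s : Fin n → Fin 2, ((1 - aPt s) ^ r + (1 - bPt s) ^ r)
      = ∑ s : Fin n → Fin 2, ((aPt s) ^ r + (bPt s) ^ r) := by
  rw [← Equiv.sum_comp (flipE n) (fun s => (aPt s) ^ r + (bPt s) ^ r)]
  exact Finset.sum_congr rfl fun s _ => by rw [aPt_flip, bPt_flip]; ring

lemma sum_split {n : ℕ} (F : (Fin (n+1) → Fin 2) → ℝ) :
    ∑ s : Fin (n+1) → Fin 2, F s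
      = ∑ t : Fin n → Fin 2, F (Fin.cons 0 t) + ∑ t : Fin n → Fin 2, F (Fin.cons 1 t) := by
  rw [← (Fin.consEquiv (fun _ : Fin (n+1) => Fin 2)).sum_comp F]
  rw [Fintype.sum_prod_type]
  rw [Fin.sum_univ_two]
  simp [Fin.consEquiv]

lemma binom_exp (m : ℕ) (x : ℝ) :
    (2/3 + x/3) ^ m = ∑ r ∈ Finset.range (m+1), (-(1/3):ℝ)^r * (1-x)^r * (m.choose r : ℝ) := by
  have h : (2/3 + x/3 : ℝ) = (-(1/3)) * (1-x) + 1 := by ring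
  rw [h, add_pow]
  exact Finset.sum_congr rfl fun r _ => by rw [mul_pow]; ring

lemma SS_rec (m n : ℕ) :
    SS m (n+1) = (1/3)^m * SS m n
      + ∑ r ∈ Finset.range (m+1), (-(1/3):ℝ)^r * (m.choose r : ℝ) * SS r n := by
  rw [SS, sum_split]
  congr 1
  · rw [SS, Finset.mul_sum]
    refine Finset.sum_congr rfl fun t _ => ?_
    rw [aPt_cons, bPt_cons]
    simp only [Fin.val_zero, Fin.val_one, Nat.cast_zero, Nat.cast_one]
    rw [show (2:ℝ) * 0 / 3 + aPt t / 3 = aPt t * (1/3) by ring,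
      show (2:ℝ) * 0 / 3 + bPt t / 3 = bPt t * (1/3) by ring, mul_pow, mul_pow]
    ring
  · have step : ∀ t : Fin n → Fin 2,
        (aPt (Fin.cons 1 t)) ^ m + (bPt (Fin.cons 1 t)) ^ m
          = ∑ r ∈ Finset.range (m+1),
              (-(1/3):ℝ)^r * (m.choose r : ℝ) * ((1 - aPt t)^r + (1 - bPt t)^r) := by
      intro t
      rw [aPt_cons, bPt_cons]
      simp only [Fin.val_zero, Fin.val_one, Nat.cast_zero, Nat.cast_one]
      rw [show (2:ℝ) * 1 / 3 + aPt t / 3 = 2/3 + (aPt t)/3 by ring,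
        show (2:ℝ) * 1 / 3 + bPt t / 3 = 2/3 + (bPt t)/3 by ring,
        binom_exp, binom_exp, ← Finset.sum_add_distrib]
      exact Finset.sum_congr rfl fun r _ => by ring
    rw [Finset.sum_congr rfl fun t _ => step t, Finset.sum_comm]
    refine Finset.sum_congr rfl fun r _ => ?_
    rw [SS, ← Finset.mul_sum, sum_flip]

lemma one_div_three_pow (m : ℕ) : ((1:ℝ)/3)^m = 1/3^m := by
  rw [div_pow, one_pow]

lemma phiM_rec (m n : ℕ) :
    phiM m (n+1) = (1/(2*3^m)) * phiM m n
      + (1/2) * ∑ r ∈ Finset.range (m+1), (-(1/3):ℝ)^r * (m.choose r : ℝ) * phiM r n := by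
  simp only [phiM_eq]
  rw [SS_rec, mul_add, Finset.mul_sum, Finset.mul_sum]
  congr 1
  · rw [pow_succ, one_div_three_pow]
    ring
  · refine Finset.sum_congr rfl fun r _ => ?_
    rw [pow_succ]
    ring

noncomputable def qq (m : ℕ) : ℝ := 1/(2*3^m) + (1/2)*(-(1/3):ℝ)^m

lemma phiM_rec2 (m n : ℕ) :
    phiM m (n+1) = qq m * phiM m n
      + (1/2) * ∑ r ∈ Finset.range m, (-(1/3):ℝ)^r * (m.choose r : ℝ) * phiM r n := by
  rw [phiM_rec, Finset.sum_range_succ, Nat.choose_self, qq]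
  push_cast
  ring

lemma qq_odd (m : ℕ) (h : Odd m) : qq m = 0 := by
  rw [qq, Odd.neg_pow h, one_div_three_pow]
  have h3 : (3:ℝ)^m ≠ 0 := by positivity
  field_simp
  ring

lemma qq_even (m : ℕ) (h : Even m) : qq m = 1/3^m := by
  rw [qq, Even.neg_pow h, one_div_three_pow]
  have h3 : (3:ℝ)^m ≠ 0 := by positivity
  field_simp
  ring

lemma qq_nonneg (m : ℕ) : 0 ≤ qq m := by
  rcases Nat.even_or_odd m with h | h
  · rw [qq_even m h]; positivity
  · rw [qq_odd m h]

lemma qq_lt_one (m : ℕ) (hm : 1 ≤ m) : qq m < 1 := by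
  rcases Nat.even_or_odd m with h | h
  · rw [qq_even m h]
    have : (3:ℝ) ≤ 3^m := by
      calc (3:ℝ) = 3^1 := by norm_num
      _ ≤ 3^m := by
        apply pow_le_pow_right₀ (by norm_num) hm
    rw [div_lt_one (by linarith)]
    linarith
  · rw [qq_odd m h]; norm_num

lemma tendsto_of_rec (q : ℝ) (hq0 : 0 ≤ q) (hq1 : q < 1) (x c : ℕ → ℝ) (L : ℝ)
    (hx : ∀ n, x (n+1) = q * x n + c n) (hc : Tendsto c atTop (𝓝 L)) :
    Tendsto x atTop (𝓝 (L / (1 - q))) := by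
  have hq' : (1:ℝ) - q > 0 := by linarith
  set A := L / (1 - q) with hA
  have hAq : q * A + L = A := by
    have hne : (1:ℝ) - q ≠ 0 := ne_of_gt hq'
    rw [hA]
    field_simp
    ring
  rw [Metric.tendsto_atTop]
  intro ε hε
  obtain ⟨N, hN⟩ := Metric.tendsto_atTop.mp hc ((1-q)*ε/3) (by positivity)
  have hbound : ∀ k, |x (N+k) - A| ≤ q^k * |x N - A| + ε/3 := by
    intro k
    induction k with
    | zero => simp; linarith
    | succ k ih =>
      have hrec : x (N+(k+1)) - A = q * (x (N+k) - A) + (c (N+k) - L) := by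
        rw [show N+(k+1) = (N+k)+1 by ring, hx]
        linarith [hAq]
      have hd : |c (N+k) - L| < (1-q)*ε/3 := by
        have := hN (N+k) (by omega)
        rwa [Real.dist_eq] at this
      calc |x (N+(k+1)) - A| = |q * (x (N+k) - A) + (c (N+k) - L)| := by rw [hrec]
        _ ≤ |q * (x (N+k) - A)| + |c (N+k) - L| := abs_add_le _ _
        _ = q * |x (N+k) - A| + |c (N+k) - L| := by
            rw [abs_mul, abs_of_nonneg hq0]
        _ ≤ q * (q^k * |x N - A| + ε/3) + (1-q)*ε/3 := by
            have := mul_le_mul_of_nonneg_left ih hq0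
            linarith
        _ ≤ q^(k+1) * |x N - A| + ε/3 := by
            rw [pow_succ]
            nlinarith
  have hq2 : Tendsto (fun k => q^k * |x N - A|) atTop (𝓝 0) := by
    simpa using (tendsto_pow_atTop_nhds_zero_of_lt_one hq0 hq1).mul_const |x N - A|
  obtain ⟨K, hK⟩ := Metric.tendsto_atTop.mp hq2 (ε/3) (by positivity)
  refine ⟨N + K, fun n hn => ?_⟩
  obtain ⟨k, rfl⟩ : ∃ k, n = N + k := ⟨n - N, by omega⟩
  have hk : K ≤ k := by omega
  have h1 := hbound k
  have h2 := hK k hk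
  rw [Real.dist_eq, sub_zero] at h2
  have h3 : q^k * |x N - A| ≥ 0 := by positivity
  rw [abs_of_nonneg h3] at h2
  rw [Real.dist_eq]
  linarith

lemma phiM_converges : ∀ m : ℕ, ∃ L : ℝ, Tendsto (phiM m) atTop (𝓝 L) := by
  intro m
  induction m using Nat.strong_induction_on with
  | _ m ih =>
    rcases Nat.eq_zero_or_pos m with h0 | hm
    · subst h0
      refine ⟨2, ?_⟩
      have h : phiM 0 = fun _ => 2 := funext phiM_zero
      rw [h]
      exact tendsto_const_nhds
    · set L : ℕ → ℝ := fun r => if h : r < m then (ih r h).choose else 0 with hLdef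
      have hL : ∀ r, r < m → Tendsto (phiM r) atTop (𝓝 (L r)) := by
        intro r hr
        simp only [hLdef, dif_pos hr]
        exact (ih r hr).choose_spec
      have hc : Tendsto (fun n => (1/2) * ∑ r ∈ Finset.range m,
          (-(1/3):ℝ)^r * (m.choose r : ℝ) * phiM r n) atTop
          (𝓝 ((1/2) * ∑ r ∈ Finset.range m, (-(1/3):ℝ)^r * (m.choose r : ℝ) * L r)) := by
        apply Tendsto.const_mul
        apply tendsto_finset_sum
        intro r hr
        exact (hL r (Finset.mem_range.mp hr)).const_mul _
      exact ⟨_, tendsto_of_rec (qq m) (qq_nonneg m) (qq_lt_one m hm) (phiM m) _ _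
        (fun n => phiM_rec2 m n) hc⟩

/-- The recursion `φ_n(x^m,c) = (1/(2·3^m))·φ_{n−1}(x^m,c)
+ (1/2)·∑_{r=0}^m (−1/3)^r·C(m,r)·φ_{n−1}(x^r,c)` for `m, n ≥ 1`; consequently all
limits `φ(x^m,c)` exist, with `φ(x^0,c) = 2` and the stated formulas for odd and
even `m`. -/
theorem phi_monomials_cantor_recursion :
    (∀ m n : ℕ, 1 ≤ m → 1 ≤ n →
      phiM m n = (1 / (2 * 3 ^ m)) * phiM m (n - 1) +
        (1 / 2) * ∑ r ∈ Finset.range (m + 1),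
          (-(1 / 3) : ℝ) ^ r * (m.choose r : ℝ) * phiM r (n - 1)) ∧
    ∃ Φ : ℕ → ℝ,
      (∀ m : ℕ, Tendsto (phiM m) atTop (nhds (Φ m))) ∧
      Φ 0 = 2 ∧
      (∀ m : ℕ, Odd m →
        Φ m = (1 / 2) * ∑ r ∈ Finset.range m,
          (-(1 / 3) : ℝ) ^ r * (m.choose r : ℝ) * Φ r) ∧
      (∀ m : ℕ, Even m → 2 ≤ m →
        Φ m = ((3 : ℝ) ^ m / (2 * ((3 : ℝ) ^ m - 1))) * ∑ r ∈ Finset.range m,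
          (-(1 / 3) : ℝ) ^ r * (m.choose r : ℝ) * Φ r) := by
  constructor
  · intro m n _ hn
    obtain ⟨k, rfl⟩ : ∃ k, n = k + 1 := ⟨n - 1, by omega⟩
    simpa using phiM_rec m k
  · set Φ : ℕ → ℝ := fun m => (phiM_converges m).choose with hΦdef
    have hΦ : ∀ m, Tendsto (phiM m) atTop (𝓝 (Φ m)) := fun m => (phiM_converges m).choose_spec
    have hval : ∀ m, 1 ≤ m →
        Φ m = ((1/2) * ∑ r ∈ Finset.range m, (-(1/3):ℝ)^r * (m.choose r : ℝ) * Φ r)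
          / (1 - qq m) := by
      intro m hm
      have hc : Tendsto (fun n => (1/2) * ∑ r ∈ Finset.range m,
          (-(1/3):ℝ)^r * (m.choose r : ℝ) * phiM r n) atTop
          (𝓝 ((1/2) * ∑ r ∈ Finset.range m, (-(1/3):ℝ)^r * (m.choose r : ℝ) * Φ r)) := by
        apply Tendsto.const_mul
        apply tendsto_finset_sum
        intro r _
        exact (hΦ r).const_mul _
      exact tendsto_nhds_unique (hΦ m)
        (tendsto_of_rec (qq m) (qq_nonneg m) (qq_lt_one m hm) (phiM m) _ _
          (fun n => phiM_rec2 m n) hc)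
    refine ⟨Φ, hΦ, ?_, ?_, ?_⟩
    · refine tendsto_nhds_unique (hΦ 0) ?_
      have h : phiM 0 = fun _ => 2 := funext phiM_zero
      rw [h]
      exact tendsto_const_nhds
    · intro m hm
      rw [hval m hm.pos, qq_odd m hm]
      simp
    · intro m hme hm2
      rw [hval m (by omega), qq_even m hme]
      have h3 : (1:ℝ) < 3^m := by
        calc (1:ℝ) < 3^1 := by norm_num
        _ ≤ 3^m := pow_le_pow_right₀ (by norm_num) (by omega)
      have h3' : (3:ℝ)^m ≠ 0 := by positivity
      have h3'' : (3:ℝ)^m - 1 ≠ 0 := by linarith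
      field_simp
end

section
/- On the middle-third Cantor set CS with Cantor function c, for all integers l, m ≥ 0 the pair (x^l, x^m·c) is integrable and φ(x^l, x^m·c) = φ(x^{l+m}, c). -/
open Filter Topology

/-- `φ_n(x^l, x^m·c) = ∑_{s ∈ {0,1}^n} (a_s^l + b_s^l)·(b_s^m·c(b_s) − a_s^m·c(a_s))`. -/
noncomputable def phiLM (l m n : ℕ) : ℝ :=
  ∑ s : Fin n → Fin 2,
    ((aPt s) ^ l + (bPt s) ^ l) * ((bPt s) ^ m * cB s - (aPt s) ^ m * cA s)

/- ### Auxiliary lemmas -/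

lemma my_abs_pow_sub_pow_le {x y : ℝ} (m : ℕ) (hx0 : 0 ≤ x) (hx1 : x ≤ 1)
    (hy0 : 0 ≤ y) (hy1 : y ≤ 1) : |x ^ m - y ^ m| ≤ m * |x - y| := by
  rw [← geom_sum₂_mul, abs_mul]
  apply mul_le_mul_of_nonneg_right _ (abs_nonneg _)
  calc |∑ i ∈ Finset.range m, x ^ i * y ^ (m - 1 - i)|
      ≤ ∑ i ∈ Finset.range m, |x ^ i * y ^ (m - 1 - i)| := Finset.abs_sum_le_sum_abs _ _
    _ ≤ ∑ _i ∈ Finset.range m, 1 := by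
        refine Finset.sum_le_sum fun i _ => ?_
        rw [abs_mul, abs_pow, abs_pow, abs_of_nonneg hx0, abs_of_nonneg hy0]
        exact mul_le_one₀ (pow_le_one₀ hx0 hx1) (pow_nonneg hy0 _) (pow_le_one₀ hy0 hy1)
    _ = m := by simp

lemma sum_geom3 (n : ℕ) : ∑ i ∈ Finset.range n, 2 / (3:ℝ) ^ (i + 1) = 1 - (1/3:ℝ) ^ n := by
  induction n with
  | zero => simp
  | succ n ih =>
    rw [Finset.sum_range_succ, ih, pow_succ, pow_succ]
    simp only [one_div, inv_pow]
    ring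

lemma sum_geom2 (n : ℕ) : ∑ i ∈ Finset.range n, 1 / (2:ℝ) ^ (i + 1) = 1 - (1/2:ℝ) ^ n := by
  induction n with
  | zero => simp
  | succ n ih =>
    rw [Finset.sum_range_succ, ih, pow_succ, pow_succ]
    simp only [one_div, inv_pow]
    ring

lemma digit_le_one {n : ℕ} (s : Fin n → Fin 2) (i : Fin n) : ((s i : ℕ) : ℝ) ≤ 1 := by
  have := (s i).is_le
  exact_mod_cast this

lemma aPt_nonneg {n : ℕ} (s : Fin n → Fin 2) : 0 ≤ aPt s :=
  Finset.sum_nonneg fun i _ => by positivity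

lemma aPt_add_le {n : ℕ} (s : Fin n → Fin 2) : aPt s + (1/3:ℝ) ^ n ≤ 1 := by
  have h1 : aPt s ≤ ∑ i : Fin n, 2 / (3:ℝ) ^ ((i : ℕ) + 1) := by
    refine Finset.sum_le_sum fun i _ => ?_
    have h := digit_le_one s i
    have hp : (0:ℝ) < 3 ^ ((i:ℕ) + 1) := by positivity
    rw [div_le_div_iff₀ hp hp]
    nlinarith
  have h2 : ∑ i : Fin n, 2 / (3:ℝ) ^ ((i : ℕ) + 1) = 1 - (1/3:ℝ) ^ n := by
    rw [Fin.sum_univ_eq_sum_range (fun i => 2 / (3:ℝ) ^ (i + 1))]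
    exact sum_geom3 n
  linarith

lemma bPt_le_one {n : ℕ} (s : Fin n → Fin 2) : bPt s ≤ 1 := by
  have := aPt_add_le s
  have : aPt s + 1 / (3:ℝ) ^ n ≤ 1 := by
    rw [← one_div_pow]; exact this
  simpa [bPt] using this

lemma aPt_le_one {n : ℕ} (s : Fin n → Fin 2) : aPt s ≤ 1 := by
  have h := bPt_le_one s
  have hp : (0:ℝ) < 1 / 3 ^ n := by positivity
  unfold bPt at h; linarith

lemma bPt_nonneg {n : ℕ} (s : Fin n → Fin 2) : 0 ≤ bPt s := by
  have := aPt_nonneg s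
  have hp : (0:ℝ) ≤ 1 / 3 ^ n := by positivity
  unfold bPt; linarith

lemma cA_nonneg {n : ℕ} (s : Fin n → Fin 2) : 0 ≤ cA s :=
  Finset.sum_nonneg fun i _ => by positivity

lemma cA_add_le {n : ℕ} (s : Fin n → Fin 2) : cA s + (1/2:ℝ) ^ n ≤ 1 := by
  have h1 : cA s ≤ ∑ i : Fin n, 1 / (2:ℝ) ^ ((i : ℕ) + 1) := by
    refine Finset.sum_le_sum fun i _ => ?_
    have h := digit_le_one s i
    have hp : (0:ℝ) < 2 ^ ((i:ℕ) + 1) := by positivity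
    rw [div_le_div_iff₀ hp hp]
    nlinarith
  have h2 : ∑ i : Fin n, 1 / (2:ℝ) ^ ((i : ℕ) + 1) = 1 - (1/2:ℝ) ^ n := by
    rw [Fin.sum_univ_eq_sum_range (fun i => 1 / (2:ℝ) ^ (i + 1))]
    exact sum_geom2 n
  linarith

lemma cA_le_one {n : ℕ} (s : Fin n → Fin 2) : cA s ≤ 1 := by
  have h := cA_add_le s
  have hp : (0:ℝ) < (1/2:ℝ) ^ n := by positivity
  linarith

/- ### snoc lemmas -/

lemma aPt_snoc {n : ℕ} (s : Fin n → Fin 2) (d : Fin 2) :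
    aPt (Fin.snoc s d : Fin (n+1) → Fin 2) = aPt s + 2 * ((d : ℕ) : ℝ) / 3 ^ (n + 1) := by
  unfold aPt
  rw [Fin.sum_univ_castSucc]
  simp

lemma cA_snoc {n : ℕ} (s : Fin n → Fin 2) (d : Fin 2) :
    cA (Fin.snoc s d : Fin (n+1) → Fin 2) = cA s + ((d : ℕ) : ℝ) / 2 ^ (n + 1) := by
  unfold cA
  rw [Fin.sum_univ_castSucc]
  simp

lemma sum_snoc {M : Type*} [AddCommMonoid M] {n : ℕ} (f : (Fin (n+1) → Fin 2) → M) :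
    ∑ t : Fin (n+1) → Fin 2, f t
      = ∑ s : Fin n → Fin 2, ∑ d : Fin 2, f (Fin.snoc s d) := by
  rw [← Fintype.sum_equiv (Fin.snocEquiv fun _ : Fin (n+1) => Fin 2)
      (fun p => f (Fin.snoc p.2 p.1)) f fun p => rfl, Fintype.sum_prod_type]
  exact Finset.sum_comm

/- ### Convergence of φ_n(x^m, c) -/

lemma phiM_diff_bound (m n : ℕ) :
    |phiM m (n+1) - phiM m n| ≤ (m : ℝ) * (1/3 : ℝ) ^ n := by
  have key : ∀ s : Fin n → Fin 2,
      |(∑ d : Fin 2, ((aPt (Fin.snoc s d : Fin (n+1) → Fin 2)) ^ m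
            + (bPt (Fin.snoc s d : Fin (n+1) → Fin 2)) ^ m)
          * (cB (Fin.snoc s d : Fin (n+1) → Fin 2) - cA (Fin.snoc s d : Fin (n+1) → Fin 2)))
        - ((aPt s) ^ m + (bPt s) ^ m) * (cB s - cA s)|
        ≤ (m : ℝ) * (1/3 : ℝ) ^ (n+1) * (1/2 : ℝ) ^ n := by
    intro s
    set a := aPt s with ha
    set t : ℝ := 1 / 3 ^ (n+1) with ht
    set h : ℝ := 1 / 2 ^ (n+1) with hh
    have h3 : (3:ℝ) ^ (n+1) = 3 ^ n * 3 := pow_succ 3 n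
    have h2 : (2:ℝ) ^ (n+1) = 2 ^ n * 2 := pow_succ 2 n
    have hb : bPt s = a + 3 * t := by
      rw [bPt, ht, h3]; ring
    have e0a : aPt (Fin.snoc s (0 : Fin 2) : Fin (n+1) → Fin 2) = a := by
      rw [aPt_snoc]; simp; rfl
    have e1a : aPt (Fin.snoc s (1 : Fin 2) : Fin (n+1) → Fin 2) = a + 2 * t := by
      rw [aPt_snoc]; simp [ht]; ring
    have e0b : bPt (Fin.snoc s (0 : Fin 2) : Fin (n+1) → Fin 2) = a + t := by
      rw [bPt, e0a, ht]
    have e1b : bPt (Fin.snoc s (1 : Fin 2) : Fin (n+1) → Fin 2) = a + 3 * t := by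
      rw [bPt, e1a, ht]; ring
    have ecc : ∀ d : Fin 2,
        cB (Fin.snoc s d : Fin (n+1) → Fin 2) - cA (Fin.snoc s d : Fin (n+1) → Fin 2) = h := by
      intro d; rw [cB, hh]; ring
    have ec : cB s - cA s = 2 * h := by
      rw [cB, hh, h2]; ring
    rw [Fin.sum_univ_two, e0a, e0b, e1a, e1b, ecc, ecc, ec, hb]
    have ht0 : 0 ≤ t := by positivity
    have hh0 : 0 ≤ h := by positivity
    -- bounds on points
    have ha0 : 0 ≤ a := aPt_nonneg s
    have hb1 : a + 3 * t ≤ 1 := by rw [← hb]; exact bPt_le_one s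
    have b1 : |(a + t) ^ m - a ^ m| ≤ (m:ℝ) * t := by
      have := my_abs_pow_sub_pow_le (x := a + t) (y := a) m (by linarith) (by linarith)
        ha0 (by linarith)
      simpa [abs_of_nonneg ht0] using this
    have b2 : |(a + 2*t) ^ m - (a + 3*t) ^ m| ≤ (m:ℝ) * t := by
      have := my_abs_pow_sub_pow_le (x := a + 2*t) (y := a + 3*t) m (by linarith)
        (by linarith) (by linarith) hb1
      have habs : |(a + 2*t) - (a + 3*t)| = t := by
        rw [show (a + 2*t) - (a + 3*t) = -t by ring, abs_neg, abs_of_nonneg ht0]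
      rw [habs] at this
      exact this
    have expand : (a ^ m + (a + t) ^ m) * h + ((a + 2*t) ^ m + (a + 3*t) ^ m) * h
        - (a ^ m + (a + 3*t) ^ m) * (2 * h)
        = (((a + t) ^ m - a ^ m) + ((a + 2*t) ^ m - (a + 3*t) ^ m)) * h := by ring
    rw [expand, abs_mul, abs_of_nonneg hh0]
    have : |((a + t) ^ m - a ^ m) + ((a + 2*t) ^ m - (a + 3*t) ^ m)| ≤ 2 * ((m:ℝ) * t) := by
      calc _ ≤ |(a + t) ^ m - a ^ m| + |(a + 2*t) ^ m - (a + 3*t) ^ m| := abs_add_le _ _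
        _ ≤ (m:ℝ) * t + (m:ℝ) * t := add_le_add b1 b2
        _ = 2 * ((m:ℝ) * t) := by ring
    calc |((a + t) ^ m - a ^ m) + ((a + 2*t) ^ m - (a + 3*t) ^ m)| * h
        ≤ 2 * ((m:ℝ) * t) * h := by
          exact mul_le_mul_of_nonneg_right this hh0
      _ = (m:ℝ) * (1/3 : ℝ) ^ (n+1) * (1/2 : ℝ) ^ n := by
          rw [ht, hh, one_div_pow, one_div_pow, h2]; ring
  have hsplit : phiM m (n+1)
      = ∑ s : Fin n → Fin 2, ∑ d : Fin 2,
        ((aPt (Fin.snoc s d : Fin (n+1) → Fin 2)) ^ m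
            + (bPt (Fin.snoc s d : Fin (n+1) → Fin 2)) ^ m)
          * (cB (Fin.snoc s d : Fin (n+1) → Fin 2) - cA (Fin.snoc s d : Fin (n+1) → Fin 2)) := by
    rw [phiM, sum_snoc]
  rw [hsplit, phiM, ← Finset.sum_sub_distrib]
  calc |∑ s : Fin n → Fin 2, ((∑ d : Fin 2,
          ((aPt (Fin.snoc s d : Fin (n+1) → Fin 2)) ^ m
              + (bPt (Fin.snoc s d : Fin (n+1) → Fin 2)) ^ m)
            * (cB (Fin.snoc s d : Fin (n+1) → Fin 2) - cA (Fin.snoc s d : Fin (n+1) → Fin 2)))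
          - ((aPt s) ^ m + (bPt s) ^ m) * (cB s - cA s))|
      ≤ ∑ s : Fin n → Fin 2, |(∑ d : Fin 2,
          ((aPt (Fin.snoc s d : Fin (n+1) → Fin 2)) ^ m
              + (bPt (Fin.snoc s d : Fin (n+1) → Fin 2)) ^ m)
            * (cB (Fin.snoc s d : Fin (n+1) → Fin 2) - cA (Fin.snoc s d : Fin (n+1) → Fin 2)))
          - ((aPt s) ^ m + (bPt s) ^ m) * (cB s - cA s)| := Finset.abs_sum_le_sum_abs _ _
    _ ≤ ∑ _s : Fin n → Fin 2, (m : ℝ) * (1/3 : ℝ) ^ (n+1) * (1/2 : ℝ) ^ n :=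
        Finset.sum_le_sum fun s _ => key s
    _ ≤ (m : ℝ) * (1/3 : ℝ) ^ n := by
        rw [Finset.sum_const, Finset.card_univ, Fintype.card_fun, Fintype.card_fin,
          Fintype.card_fin, nsmul_eq_mul]
        push_cast
        have h21 : (2:ℝ) ^ n * (1/2:ℝ) ^ n = 1 := by rw [← mul_pow]; norm_num
        have heq : (2:ℝ) ^ n * ((m:ℝ) * (1/3:ℝ) ^ (n+1) * (1/2:ℝ) ^ n)
            = (m:ℝ) * (1/3:ℝ) ^ n * (1/3) := by
          rw [pow_succ, show (2:ℝ) ^ n * ((m:ℝ) * ((1/3:ℝ) ^ n * (1/3)) * (1/2:ℝ) ^ n)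
            = ((2:ℝ) ^ n * (1/2:ℝ) ^ n) * ((m:ℝ) * (1/3:ℝ) ^ n * (1/3)) from by ring, h21,
            one_mul]
        rw [heq]
        have hpos : (0:ℝ) ≤ (m:ℝ) * (1/3:ℝ) ^ n := by positivity
        linarith

lemma phiM_tendsto (m : ℕ) : ∃ L : ℝ, Tendsto (phiM m) atTop (nhds L) := by
  set d : ℕ → ℝ := fun n => phiM m (n+1) - phiM m n with hd
  have hsum : Summable d := by
    apply Summable.of_norm_bounded (g := fun n => (m : ℝ) * (1/3 : ℝ) ^ n)
    · exact (summable_geometric_of_lt_one (by norm_num) (by norm_num)).mul_left _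
    · intro n
      rw [Real.norm_eq_abs]
      exact phiM_diff_bound m n
  refine ⟨phiM m 0 + ∑' n, d n, ?_⟩
  have h1 : Tendsto (fun n => ∑ i ∈ Finset.range n, d i) atTop (nhds (∑' n, d n)) :=
    hsum.hasSum.tendsto_sum_nat
  have h2 : Tendsto (fun n => phiM m 0 + ∑ i ∈ Finset.range n, d i) atTop
      (nhds (phiM m 0 + ∑' n, d n)) := tendsto_const_nhds.add h1
  refine h2.congr fun n => ?_
  rw [hd, Finset.sum_range_sub (fun i => phiM m i)]
  ring

/- ### φ_n(x^l, x^m c) − φ_n(x^{l+m}, c) → 0 -/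

lemma phiLM_sub_phiM_bound (l m n : ℕ) :
    |phiLM l m n - phiM (l + m) n| ≤ 3 * (m : ℝ) * (2/3 : ℝ) ^ n := by
  have key : ∀ s : Fin n → Fin 2,
      |((aPt s) ^ l + (bPt s) ^ l) * ((bPt s) ^ m * cB s - (aPt s) ^ m * cA s)
        - ((aPt s) ^ (l+m) + (bPt s) ^ (l+m)) * (cB s - cA s)|
        ≤ 3 * (m : ℝ) * (1/3 : ℝ) ^ n := by
    intro s
    set a := aPt s with ha
    set b := bPt s with hbdef
    have ha0 : 0 ≤ a := aPt_nonneg s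
    have ha1 : a ≤ 1 := aPt_le_one s
    have hb0 : 0 ≤ b := bPt_nonneg s
    have hb1 : b ≤ 1 := bPt_le_one s
    have hc0 : 0 ≤ cA s := cA_nonneg s
    have hc1 : cA s ≤ 1 := cA_le_one s
    have hcb : cB s = cA s + 1 / 2 ^ n := rfl
    have hba : b = a + 1 / 3 ^ n := rfl
    have hid : ((a) ^ l + (b) ^ l) * ((b) ^ m * cB s - (a) ^ m * cA s)
        - ((a) ^ (l+m) + (b) ^ (l+m)) * (cB s - cA s)
        = (b ^ m - a ^ m) * ((a ^ l + b ^ l) * cA s + a ^ l * (1 / 2 ^ n)) := by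
      rw [hcb, pow_add, pow_add]; ring
    rw [hid, abs_mul]
    have h1 : |b ^ m - a ^ m| ≤ (m : ℝ) * (1/3 : ℝ) ^ n := by
      have := my_abs_pow_sub_pow_le (x := b) (y := a) m hb0 hb1 ha0 ha1
      have habs : |b - a| = (1/3 : ℝ) ^ n := by
        rw [hba, show a + 1 / (3:ℝ) ^ n - a = 1 / 3 ^ n by ring, one_div_pow,
          abs_of_nonneg (by positivity)]
      rw [habs] at this
      exact this
    have h2 : |(a ^ l + b ^ l) * cA s + a ^ l * (1 / 2 ^ n)| ≤ 3 := by
      have hal : a ^ l ≤ 1 := pow_le_one₀ ha0 ha1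
      have hbl : b ^ l ≤ 1 := pow_le_one₀ hb0 hb1
      have hal0 : 0 ≤ a ^ l := pow_nonneg ha0 _
      have hbl0 : 0 ≤ b ^ l := pow_nonneg hb0 _
      have hp0 : (0:ℝ) ≤ 1 / 2 ^ n := by positivity
      have hp1 : (1:ℝ) / 2 ^ n ≤ 1 := by
        rw [div_le_one (by positivity)]
        exact one_le_pow₀ (by norm_num : (1:ℝ) ≤ 2)
      rw [abs_of_nonneg (by positivity)]
      nlinarith
    calc |b ^ m - a ^ m| * |(a ^ l + b ^ l) * cA s + a ^ l * (1 / 2 ^ n)|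
        ≤ ((m : ℝ) * (1/3 : ℝ) ^ n) * 3 := by
          apply mul_le_mul h1 h2 (abs_nonneg _)
          positivity
      _ = 3 * (m : ℝ) * (1/3 : ℝ) ^ n := by ring
  rw [phiLM, phiM, ← Finset.sum_sub_distrib]
  calc |∑ s : Fin n → Fin 2, (((aPt s) ^ l + (bPt s) ^ l)
          * ((bPt s) ^ m * cB s - (aPt s) ^ m * cA s)
          - ((aPt s) ^ (l+m) + (bPt s) ^ (l+m)) * (cB s - cA s))|
      ≤ ∑ s : Fin n → Fin 2, |((aPt s) ^ l + (bPt s) ^ l)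
          * ((bPt s) ^ m * cB s - (aPt s) ^ m * cA s)
          - ((aPt s) ^ (l+m) + (bPt s) ^ (l+m)) * (cB s - cA s)| :=
        Finset.abs_sum_le_sum_abs _ _
    _ ≤ ∑ _s : Fin n → Fin 2, 3 * (m : ℝ) * (1/3 : ℝ) ^ n :=
        Finset.sum_le_sum fun s _ => key s
    _ = 3 * (m : ℝ) * (2/3 : ℝ) ^ n := by
        rw [Finset.sum_const, Finset.card_univ, Fintype.card_fun, Fintype.card_fin,
          Fintype.card_fin, nsmul_eq_mul]
        push_cast
        rw [show ((2:ℝ))^n * (3 * (m:ℝ) * (1/3)^n) = 3 * (m:ℝ) * ((2:ℝ)^n * (1/3:ℝ)^n) from by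
          ring, ← mul_pow]
        norm_num

/-- On the middle-third Cantor set, for all `l, m ≥ 0` the pair `(x^l, x^m·c)` is
integrable and `φ(x^l, x^m·c) = φ(x^{l+m}, c)`. -/
theorem phi_monomial_times_cantor (l m : ℕ) :
    ∃ L : ℝ, Tendsto (phiLM l m) atTop (nhds L) ∧
      Tendsto (phiM (l + m)) atTop (nhds L) := by
  obtain ⟨L, hL⟩ := phiM_tendsto (l + m)
  refine ⟨L, ?_, hL⟩
  have hdiff : Tendsto (fun n => phiLM l m n - phiM (l + m) n) atTop (nhds 0) := by
    apply squeeze_zero_norm (fun n => ?_)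
      (by simpa using (tendsto_pow_atTop_nhds_zero_of_lt_one (by norm_num : (0:ℝ) ≤ 2/3)
        (by norm_num)).const_mul (3 * (m:ℝ)))
    rw [Real.norm_eq_abs]
    exact phiLM_sub_phiM_bound l m n
  have := hdiff.add hL
  simpa using this
end

section
/- On the middle-third Cantor set CS, let h : CS → ℝ be defined by h(x) = 0 for 0 ≤ x < 1/3 and h(x) = 1 for 1/3 ≤ x ≤ 1 (a non-continuous function). Then φ_n(h, h) = 1 for every n ≥ 1; in particular the pair (h, h) is integrable and φ(h, h) = 1. More precisely, for 𝐬 = (s_1,…,s_n) ∈ {0,1}^n, the term (h(a_𝐬)+h(b_𝐬))(h(b_𝐬)−h(a_𝐬)) equals 1 if s_1 = 0 and s_2 = ⋯ = s_n = 1, and equals 0 otherwise. -/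
open Filter Topology

/-- `φ_n(f,g) = ∑_{s ∈ {0,1}^n} (f(a_s)+f(b_s))·(g(b_s)−g(a_s))` on the
middle-third Cantor set. -/
noncomputable def phiCS (f g : ℝ → ℝ) (n : ℕ) : ℝ :=
  ∑ s : Fin n → Fin 2, (f (aPt s) + f (bPt s)) * (g (bPt s) - g (aPt s))

/-- The non-continuous function `h` with `h(x) = 0` for `x < 1/3` and `h(x) = 1`
for `x ≥ 1/3`. -/
noncomputable def hStep : ℝ → ℝ := fun x => if x < 1 / 3 then 0 else 1

open Finset

lemma sum_t (n : ℕ) : ∑ i ∈ Finset.range n, (2:ℝ)/3^(i+1) = 1 - 1/3^n := by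
  induction n with
  | zero => simp
  | succ k ih =>
    rw [Finset.sum_range_succ, ih]
    have h3 : (3:ℝ)^k ≠ 0 := by positivity
    field_simp
    ring

lemma sum_univ_t (n : ℕ) : ∑ i : Fin n, (2:ℝ)/3^((i:ℕ)+1) = 1 - 1/3^n := by
  rw [Fin.sum_univ_eq_sum_range (fun i => (2:ℝ)/3^(i+1))]
  exact sum_t n

lemma term_eq (n : ℕ) (hn : 1 ≤ n) (s : Fin n → Fin 2) :
    (hStep (aPt s) + hStep (bPt s)) * (hStep (bPt s) - hStep (aPt s)) =
      if (s ⟨0, hn⟩ : ℕ) = 0 ∧ (∀ i : Fin n, 0 < (i : ℕ) → (s i : ℕ) = 1)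
      then 1 else 0 := by
  set i0 : Fin n := ⟨0, hn⟩ with hi0def
  set g : Fin n → ℝ := fun i => 2 * ((s i : ℕ) : ℝ) / 3 ^ ((i : ℕ) + 1) with hgdef
  set t : Fin n → ℝ := fun i => (2:ℝ) / 3 ^ ((i : ℕ) + 1) with htdef
  have hgnn : ∀ i : Fin n, 0 ≤ g i := fun i => by positivity
  have hle : ∀ i : Fin n, g i ≤ t i := by
    intro i
    have h1 : ((s i : ℕ) : ℝ) ≤ 1 := by
      have := (s i).isLt
      exact_mod_cast Nat.lt_succ_iff.mp this
    have h3 : (0:ℝ) < 3 ^ ((i:ℕ)+1) := by positivity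
    rw [hgdef, htdef]
    simp only
    rw [div_le_div_iff₀ h3 h3]
    nlinarith
  have hs0 : (s i0 : ℕ) = 0 ∨ (s i0 : ℕ) = 1 := by
    have := (s i0).isLt; omega
  have haPt : aPt s = ∑ i : Fin n, g i := rfl
  rcases hs0 with h0 | h1
  · -- s 0 = 0
    have hg0 : g i0 = 0 := by simp [hgdef, h0]
    have haeq : aPt s = ∑ i ∈ univ.erase i0, g i := by
      rw [haPt, ← Finset.sum_erase _ hg0]
    have hterase : ∑ i ∈ univ.erase i0, t i = 1 - 1/3^n - 2/3 := by
      rw [Finset.sum_erase_eq_sub (mem_univ i0)]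
      have : t i0 = 2/3 := by simp [htdef, hi0def]
      rw [sum_univ_t, this]
    have ha_le : aPt s ≤ 1 - 1/3^n - 2/3 := by
      rw [haeq, ← hterase]
      exact Finset.sum_le_sum (fun i _ => hle i)
    have hpn : (0:ℝ) < 1/3^n := by positivity
    have ha_lt : aPt s < 1/3 := by linarith
    have hSa : hStep (aPt s) = 0 := by simp only [hStep]; rw [if_pos ha_lt]
    by_cases hall : ∀ i : Fin n, 0 < (i : ℕ) → (s i : ℕ) = 1
    · have haeq2 : aPt s = 1 - 1/3^n - 2/3 := by
        rw [haeq, ← hterase]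
        refine Finset.sum_congr rfl (fun i hi => ?_)
        have hne : i ≠ i0 := Finset.ne_of_mem_erase hi
        have hpos : 0 < (i : ℕ) := by
          rcases Nat.eq_zero_or_pos (i : ℕ) with h | h
          · exact absurd (Fin.ext (by simp [hi0def, h])) hne
          · exact h
        simp [hgdef, htdef, hall i hpos]
      have hb : bPt s = 1/3 := by rw [bPt, haeq2]; ring
      have hSb : hStep (bPt s) = 1 := by rw [hb]; simp [hStep]
      rw [hSa, hSb, if_pos ⟨h0, hall⟩]; ring
    · push_neg at hall
      obtain ⟨j, hj, hsj⟩ := hall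
      have hsj0 : (s j : ℕ) = 0 := by have := (s j).isLt; omega
      have hgj : g j = 0 := by simp [hgdef, hsj0]
      have hji0 : j ≠ i0 := by
        intro h; rw [h] at hj; simp [hi0def] at hj
      have hjmem : j ∈ univ.erase i0 := Finset.mem_erase.mpr ⟨hji0, mem_univ j⟩
      have ha_le2 : aPt s ≤ 1 - 1/3^n - 2/3 - t j := by
        rw [haeq, ← Finset.sum_erase _ hgj]
        have h1 : ∑ i ∈ (univ.erase i0).erase j, g i ≤ ∑ i ∈ (univ.erase i0).erase j, t i :=
          Finset.sum_le_sum (fun i _ => hle i)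
        have h2 : ∑ i ∈ (univ.erase i0).erase j, t i = (∑ i ∈ univ.erase i0, t i) - t j :=
          Finset.sum_erase_eq_sub hjmem
        rw [h2, hterase] at h1
        linarith
      have htjpos : 0 < t j := by rw [htdef]; positivity
      have hb_lt : bPt s < 1/3 := by rw [bPt]; linarith
      have hSb : hStep (bPt s) = 0 := by simp only [hStep]; rw [if_pos hb_lt]
      rw [hSa, hSb, if_neg]
      · ring
      · rintro ⟨-, hall'⟩
        exact hsj (hall' j hj)
  · -- s 0 = 1
    have hga : g i0 = 2/3 := by simp [hgdef, hi0def, show ((s ⟨0, hn⟩ : Fin 2) : ℕ) = 1 from h1]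
    have ha_ge : 2/3 ≤ aPt s := by
      rw [haPt, ← hga]
      exact Finset.single_le_sum (fun i _ => hgnn i) (mem_univ i0)
    have hpn : (0:ℝ) ≤ 1/3^n := by positivity
    have hSa : hStep (aPt s) = 1 := by
      simp only [hStep]
      rw [if_neg]; linarith
    have hSb : hStep (bPt s) = 1 := by
      simp only [hStep]
      rw [if_neg]
      rw [bPt]; push_neg; linarith
    rw [hSa, hSb, if_neg]
    · ring
    · rintro ⟨h0, -⟩; omega

theorem phi_step_function_aux (n : ℕ) (hn : 1 ≤ n) :
    (∑ s : Fin n → Fin 2, (hStep (aPt s) + hStep (bPt s)) * (hStep (bPt s) - hStep (aPt s))) = 1 := by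
  set star : Fin n → Fin 2 := fun i => if (i : ℕ) = 0 then 0 else 1 with hstar
  have hP : ∀ s : Fin n → Fin 2,
      ((s ⟨0, hn⟩ : ℕ) = 0 ∧ (∀ i : Fin n, 0 < (i : ℕ) → (s i : ℕ) = 1)) ↔ s = star := by
    intro s
    constructor
    · rintro ⟨h0, hall⟩
      funext i
      by_cases hi : (i : ℕ) = 0
      · have : i = ⟨0, hn⟩ := Fin.ext (by simp [hi])
        rw [this]
        apply Fin.ext
        simp [hstar, h0]
      · have hpos : 0 < (i : ℕ) := Nat.pos_of_ne_zero hi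
        apply Fin.ext
        simp [hstar, hi, hall i hpos]
    · rintro rfl
      constructor
      · rw [hstar]
        norm_num
      · intro i hi
        have h' : (i:ℕ) ≠ 0 := by omega
        rw [hstar]
        simp only [h', if_false]
        rfl
  calc (∑ s : Fin n → Fin 2, (hStep (aPt s) + hStep (bPt s)) * (hStep (bPt s) - hStep (aPt s)))
      = ∑ s : Fin n → Fin 2, if s = star then (1:ℝ) else 0 := by
        refine Finset.sum_congr rfl (fun s _ => ?_)
        rw [term_eq n hn s]
        by_cases h : s = star
        · rw [if_pos ((hP s).mpr h), if_pos h]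
        · rw [if_neg (fun hc => h ((hP s).mp hc)), if_neg h]
    _ = 1 := by simp


/-- For the step function `h`, the term of `φ_n(h,h)` at a word `s` is `1` exactly
when `s_1 = 0` and `s_2 = ⋯ = s_n = 1` and `0` otherwise; hence `φ_n(h,h) = 1` for
all `n ≥ 1` and `(h,h)` is integrable with `φ(h,h) = 1`. -/
theorem phi_step_function :
    (∀ n : ℕ, ∀ hn : 1 ≤ n, ∀ s : Fin n → Fin 2,
      (hStep (aPt s) + hStep (bPt s)) * (hStep (bPt s) - hStep (aPt s)) =
        if (s ⟨0, hn⟩ : ℕ) = 0 ∧ (∀ i : Fin n, 0 < (i : ℕ) → (s i : ℕ) = 1)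
        then 1 else 0) ∧
    (∀ n : ℕ, 1 ≤ n → phiCS hStep hStep n = 1) ∧
    Tendsto (phiCS hStep hStep) atTop (nhds 1) := by
  refine ⟨term_eq, ?_, ?_⟩
  · intro n hn
    rw [phiCS]
    exact phi_step_function_aux n hn
  · have hev : ∀ᶠ n in atTop, phiCS hStep hStep n = 1 := by
      rw [eventually_atTop]
      exact ⟨1, fun n hn => by rw [phiCS]; exact phi_step_function_aux n hn⟩
    exact Tendsto.congr' (hev.mono fun n h => h.symm) tendsto_const_nhds
end
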